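/- Let m ≥ 1 and n ≥ 1 be natural numbers, let σ_f > 0 and σ > 0 be reals, and let Σ₁, …, Σₙ be positive semidefinite real m×m matrices whose diagonal entries are all at most σ_f². Set C = 2·σ_f^{2m} / log(1 + σ^{−2m}·σ_f^{2m}). Then ∑_{i=1}^{n} det Σᵢ ≤ C · ( (1/2)·∑_{i=1}^{n} log det(I_m + σ^{−2}·Σᵢ) ). -/

import Mathlib

/-!
On the eigenbasis of `Σ` everything is a product over the eigenvalues `λⱼ ≥ 0`: `det Σ = ∏ λⱼ`
and `det (I + σ⁻² Σ) = ∏ (1 + σ⁻² λⱼ) ≥ 1 + σ⁻²ᵐ det Σ`. By AM-GM and the diagonal bound,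
`det Σ ≤ (tr Σ / m)ᵐ ≤ σ_f²ᵐ`, and on `[0, σ_f²ᵐ]` the concave function `x ↦ log (1 + σ⁻²ᵐ x)`,
which vanishes at `0`, lies above its chord, so `det Σ ≤ C/2 · log det (I + σ⁻² Σ)` for each `Σ`.
-/

open Matrix Finset

theorem Finset.one_add_prod_le_prod_one_add {ι R : Type*} [CommSemiring R] [PartialOrder R]
    [IsOrderedRing R] {s : Finset ι} (hs : s.Nonempty) {x : ι → R} (hx : ∀ i ∈ s, 0 ≤ x i) :
    1 + ∏ i ∈ s, x i ≤ ∏ i ∈ s, (1 + x i) := by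
  classical
  rw [prod_one_add, ← prod_empty (f := x),
    ← sum_pair (f := fun t => ∏ i ∈ t, x i) hs.ne_empty.symm]
  refine sum_le_sum_of_subset_of_nonneg ?_ fun t ht _ => prod_nonneg fun i hi => hx i ?_
  · simp [insert_subset_iff]
  · exact mem_powerset.mp ht hi

theorem Real.mul_log_one_add_mul_le {a d M : ℝ} (ha : 0 ≤ a) (hd : 0 ≤ d) (hdM : d ≤ M) :
    d * Real.log (1 + a * M) ≤ M * Real.log (1 + a * d) := by
  rcases (hd.trans hdM).eq_or_lt with rfl | hM
  · simp [le_antisymm hdM hd]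
  have hp : 0 ≤ d / M := div_nonneg hd hM.le
  have hp1 : d / M ≤ 1 := (div_le_one hM).mpr hdM
  have hbase : 0 < 1 + a * M := by positivity
  have hbern : (1 + a * M) ^ (d / M) ≤ 1 + a * d := by
    convert rpow_one_add_le_one_add_mul_self (s := a * M) (by nlinarith) hp hp1 using 2
    field_simp
  calc d * Real.log (1 + a * M) = M * Real.log ((1 + a * M) ^ (d / M)) := by
        rw [Real.log_rpow hbase]; field_simp
    _ ≤ M * Real.log (1 + a * d) := by gcongr

theorem Real.prod_le_pow_card_of_sum_le {ι : Type*} {s : Finset ι} {z : ι → ℝ} {t : ℝ}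
    (hz : ∀ i ∈ s, 0 ≤ z i) (hsum : ∑ i ∈ s, z i ≤ #s * t) : ∏ i ∈ s, z i ≤ t ^ #s := by
  rcases s.eq_empty_or_nonempty with rfl | hs
  · simp
  have hcard : (0 : ℝ) < #s := by exact_mod_cast hs.card_pos
  have hgm := Real.geom_mean_le_arith_mean s (fun _ => 1) z (fun _ _ => zero_le_one)
    (by simpa using hcard) hz
  simp only [Real.rpow_one, sum_const, nsmul_eq_mul, mul_one, one_mul] at hgm
  have hprod : 0 ≤ ∏ i ∈ s, z i := prod_nonneg hz
  calc ∏ i ∈ s, z i = ((∏ i ∈ s, z i) ^ (#s : ℝ)⁻¹) ^ #s := by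
        rw [← Real.rpow_mul_natCast hprod, inv_mul_cancel₀ hcard.ne', Real.rpow_one]
    _ ≤ t ^ #s := by
        gcongr
        exact hgm.trans ((div_le_iff₀' hcard).mpr hsum)

namespace Matrix
variable {n : Type*} [Fintype n] [DecidableEq n] {A : Matrix n n ℝ}

theorem IsHermitian.det_one_add_smul (hA : A.IsHermitian) (c : ℝ) :
    (1 + c • A).det = ∏ i, (1 + c * hA.eigenvalues i) := by
  set U := hA.eigenvectorUnitary
  have hconj : 1 + c • A =
      Unitary.conjStarAlgAut ℝ _ U (diagonal fun i => 1 + c * hA.eigenvalues i) := by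
    conv_lhs => rw [hA.spectral_theorem]
    rw [← map_smul, ← map_one (Unitary.conjStarAlgAut ℝ _ U), ← map_add, ← diagonal_one,
      ← diagonal_smul, diagonal_add]
    rfl
  rw [hconj, Unitary.conjStarAlgAut_apply, det_mul_right_comm, Unitary.mul_star_self_of_mem U.2,
    one_mul, det_diagonal]

theorem PosSemidef.one_add_pow_mul_det_le_det_one_add_smul [Nonempty n] (hA : A.PosSemidef)
    {c : ℝ} (hc : 0 ≤ c) : 1 + c ^ Fintype.card n * A.det ≤ (1 + c • A).det := by
  rw [hA.1.det_one_add_smul, hA.1.det_eq_prod_eigenvalues, ← card_univ, ← prod_const,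
    ← prod_mul_distrib]
  exact one_add_prod_le_prod_one_add univ_nonempty fun i _ =>
    mul_nonneg hc (hA.eigenvalues_nonneg i)

theorem PosSemidef.det_le_pow_of_diag_le (hA : A.PosSemidef) {t : ℝ} (hdiag : ∀ i, A i i ≤ t) :
    A.det ≤ t ^ Fintype.card n := by
  have htrace : ∑ i, hA.1.eigenvalues i ≤ #(univ : Finset n) * t := by
    calc ∑ i, hA.1.eigenvalues i = ∑ i, A i i := by
          simpa [trace] using hA.1.trace_eq_sum_eigenvalues.symm
      _ ≤ ∑ _i : n, t := sum_le_sum fun i _ => hdiag i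
      _ = #(univ : Finset n) * t := by simp
  rw [hA.1.det_eq_prod_eigenvalues]
  exact Real.prod_le_pow_card_of_sum_le (fun i _ => hA.eigenvalues_nonneg i) htrace

theorem PosSemidef.det_mul_log_le [Nonempty n] (hA : A.PosSemidef) {c t : ℝ} (hc : 0 ≤ c)
    (hdiag : ∀ i, A i i ≤ t) :
    A.det * Real.log (1 + c ^ Fintype.card n * t ^ Fintype.card n) ≤
      t ^ Fintype.card n * Real.log (1 + c • A).det :=
  calc A.det * Real.log (1 + c ^ Fintype.card n * t ^ Fintype.card n)
      _ ≤ t ^ Fintype.card n * Real.log (1 + c ^ Fintype.card n * A.det) :=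
        Real.mul_log_one_add_mul_le (by positivity) hA.det_nonneg (hA.det_le_pow_of_diag_le hdiag)
      _ ≤ t ^ Fintype.card n * Real.log (1 + c • A).det := by
        have hdet := hA.det_nonneg
        have ht : 0 ≤ t ^ Fintype.card n := hdet.trans (hA.det_le_pow_of_diag_le hdiag)
        gcongr
        exact hA.one_add_pow_mul_det_le_det_one_add_smul hc

end Matrix

theorem sum_det_le_mutual_information_general
    (m n : ℕ) (hm : 1 ≤ m) (σf σ : ℝ) (hσf : 0 < σf) (hσ : 0 < σ)
    (S : Fin n → Matrix (Fin m) (Fin m) ℝ)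
    (hpsd : ∀ i, (S i).PosSemidef)
    (hdiag : ∀ i j, S i j j ≤ σf ^ 2) :
    ∑ i, (S i).det ≤
      (2 * σf ^ (2 * m) / Real.log (1 + (σ ^ (2 * m))⁻¹ * σf ^ (2 * m))) *
        ((1 / 2 : ℝ) * ∑ i, Real.log ((1 + (σ ^ 2)⁻¹ • S i).det)) := by
  have : Nonempty (Fin m) := ⟨⟨0, hm⟩⟩
  have hpow : ∀ x : ℝ, x ^ (2 * m) = (x ^ 2) ^ Fintype.card (Fin m) := by
    simp [pow_mul]
  rw [hpow, hpow, ← inv_pow]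
  set L := Real.log (1 + ((σ ^ 2)⁻¹) ^ Fintype.card (Fin m) * (σf ^ 2) ^ Fintype.card (Fin m))
  have hL : 0 < L := Real.log_pos (by simp only [lt_add_iff_pos_right]; positivity)
  have hsum : (∑ i, (S i).det) * L ≤
      (σf ^ 2) ^ Fintype.card (Fin m) * ∑ i, Real.log ((1 + (σ ^ 2)⁻¹ • S i).det) := by
    rw [sum_mul, mul_sum]
    exact sum_le_sum fun i _ => (hpsd i).det_mul_log_le (by positivity) (hdiag i)
  calc ∑ i, (S i).det ≤ (σf ^ 2) ^ Fintype.card (Fin m) *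
        (∑ i, Real.log ((1 + (σ ^ 2)⁻¹ • S i).det)) / L := (le_div_iff₀ hL).mpr hsum
    _ = _ := by ring

/-- Lemma 4 of the paper: the sum of the determinants of the positive
semidefinite covariance matrices `S 1, …, S n` (with diagonal entries at most `σf ^ 2`)
is bounded by `C` times the mutual information `(1/2) ∑ i, log det (I + σ⁻² • S i)`,
where `C = 2 σf^{2m} / log (1 + σ^{-2m} σf^{2m})`. -/
theorem sum_det_le_mutual_information
    (m n : ℕ) (hm : 1 ≤ m) (hn : 1 ≤ n) (σf σ : ℝ) (hσf : 0 < σf) (hσ : 0 < σ)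
    (S : Fin n → Matrix (Fin m) (Fin m) ℝ)
    (hpsd : ∀ i, (S i).PosSemidef)
    (hdiag : ∀ i j, S i j j ≤ σf ^ 2) :
    ∑ i, (S i).det ≤
      (2 * σf ^ (2 * m) / Real.log (1 + (σ ^ (2 * m))⁻¹ * σf ^ (2 * m))) *
        ((1 / 2 : ℝ) * ∑ i, Real.log ((1 + (σ ^ 2)⁻¹ • S i).det)) :=
  sum_det_le_mutual_information_general m n hm σf σ hσf hσ S hpsd hdiag
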